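/- arXiv:2504.11161 — 4 statements merged into one kernel-verified Lean document; each statement's English description precedes it below -/
import Mathlib

section
/- Let X and Y be real Banach spaces, A ⊆ X, and T : X → Y a bounded linear operator that preserves Birkhoff-James orthogonality at each point of A. Then T preserves Birkhoff-James orthogonality at each smooth point of X lying in the closure of A. -/
open Metric Filter Set

/-- Birkhoff-James orthogonality. -/
def BJOrth {X : Type*} [NormedAddCommGroup X] [NormedSpace ℝ X] (u v : X) : Prop :=
  ∀ lam : ℝ, ‖u‖ ≤ ‖u + lam • v‖

/-- Set of norm-one supporting functionals at a point. -/
def SuppFunc {X : Type*} [NormedAddCommGroup X] [NormedSpace ℝ X] (x : X) :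
    Set (StrongDual ℝ X) := {f | ‖f‖ = 1 ∧ f x = ‖x‖}

/-- A nonzero point is smooth if it has a unique norm-one supporting functional. -/
def SmoothPt {X : Type*} [NormedAddCommGroup X] [NormedSpace ℝ X] (x : X) : Prop :=
  x ≠ 0 ∧ ∃! f : StrongDual ℝ X, f ∈ SuppFunc x

/-- `T` preserves Birkhoff-James orthogonality at `x`. -/
def PreservesBJAt {X Y : Type*} [NormedAddCommGroup X] [NormedSpace ℝ X]
    [NormedAddCommGroup Y] [NormedSpace ℝ Y] (T : X →L[ℝ] Y) (x : X) : Prop :=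
  ∀ v : X, BJOrth x v → BJOrth (T x) (T v)

/-!
Let `u n ∈ A` tend to the smooth point `x`, with norming functionals `g n` of `u n`, and let
`x ⊥ v`. By Hahn–Banach some norming functional `F` of `x` vanishes at `v`; by smoothness it is the
only one, so Banach–Alaoglu forces `g n → F` weak-*, whence `g n v → 0`. The corrected vectors
`v - (g n v / ‖u n‖) • u n` are killed by `g n`, hence orthogonal to `u n`, and tend to `v`.
Applying `T` at the points `u n` and passing to the limit (orthogonality is a closed relation)
gives `T x ⊥ T v`.
-/

open Topology

section BirkhoffJames

variable {X : Type*} [NormedAddCommGroup X] [NormedSpace ℝ X]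

lemma bjOrth_of_apply_eq_zero {F : StrongDual ℝ X} {u w : X} (hF : ‖F‖ ≤ 1) (hFu : F u = ‖u‖)
    (hFw : F w = 0) : BJOrth u w := fun lam =>
  calc ‖u‖ = F (u + lam • w) := by simp [hFu, hFw]
    _ ≤ ‖F (u + lam • w)‖ := le_abs_self _
    _ ≤ ‖F‖ * ‖u + lam • w‖ := F.le_opNorm _
    _ ≤ ‖u + lam • w‖ := mul_le_of_le_one_left (norm_nonneg _) hF

lemma bjOrth_sub_smul_of_apply_eq_norm {F : StrongDual ℝ X} {u : X} (hF : ‖F‖ ≤ 1)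
    (hFu : F u = ‖u‖) (v : X) : BJOrth u (v - (F v / ‖u‖) • u) := by
  rcases eq_or_ne u 0 with rfl | hu
  · exact fun lam => by simp
  · refine bjOrth_of_apply_eq_zero hF hFu ?_
    rw [map_sub, map_smul, hFu, smul_eq_mul, div_mul_cancel₀ _ (norm_ne_zero_iff.mpr hu), sub_self]

lemma mem_suppFunc_of_norm_le_one {F : StrongDual ℝ X} {x : X} (hx : x ≠ 0) (hF : ‖F‖ ≤ 1)
    (hFx : F x = ‖x‖) : F ∈ SuppFunc x := by
  refine ⟨le_antisymm hF ?_, hFx⟩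
  exact one_le_of_le_mul_right₀ (norm_pos_iff.mpr hx) (by simpa [hFx] using F.le_opNorm x)

lemma isClosed_setOf_bjOrth : IsClosed {p : X × X | BJOrth p.1 p.2} := by
  simp only [BJOrth, Set.ofPred_forall]
  exact isClosed_iInter fun lam =>
    isClosed_le continuous_fst.norm (continuous_fst.add (continuous_snd.const_smul lam)).norm

/-- James: the quotient norm of `x` modulo `ℝ ∙ v` is `‖x‖`, so a norming functional of the
quotient pulls back to one of `x` vanishing at `v`. -/
lemma BJOrth.exists_mem_suppFunc_apply_eq_zero {x v : X} (hx : x ≠ 0) (h : BJOrth x v) :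
    ∃ F ∈ SuppFunc x, F v = 0 := by
  set S := ℝ ∙ v
  have hquot : ‖(Submodule.Quotient.mk x : X ⧸ S)‖ = ‖x‖ := by
    refine le_antisymm (Submodule.Quotient.norm_mk_le S x) ?_
    refine QuotientAddGroup.le_norm_iff.mpr fun m hm => ?_
    obtain ⟨c, hc⟩ := Submodule.mem_span_singleton.mp ((Submodule.Quotient.eq S).mp hm)
    rw [show m = x + c • v by rw [hc]; abel]
    exact h c
  obtain ⟨φ, hφ, hφx⟩ := exists_dual_vector ℝ (Submodule.Quotient.mk x : X ⧸ S)
    (by rw [hquot]; exact norm_ne_zero_iff.mpr hx)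
  refine ⟨φ.comp S.mkQL, mem_suppFunc_of_norm_le_one hx ?_ ?_, ?_⟩
  · refine ContinuousLinearMap.opNorm_le_bound _ zero_le_one fun y => ?_
    calc ‖φ (S.mkQ y)‖ ≤ ‖φ‖ * ‖S.mkQ y‖ := φ.le_opNorm _
      _ ≤ 1 * ‖y‖ := by rw [hφ, one_mul, one_mul]; exact Submodule.Quotient.norm_mk_le S y
  · simpa [hquot] using hφx
  · simp [(Submodule.Quotient.mk_eq_zero S).mpr (Submodule.mem_span_singleton_self v)]

lemma tendsto_apply_of_apply_eq_norm {ι : Type*} {l : Filter ι} {g : ι → StrongDual ℝ X}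
    {u : ι → X} {x : X} (hg : ∀ i, ‖g i‖ ≤ 1) (hgu : ∀ i, g i (u i) = ‖u i‖)
    (hu : Tendsto u l (𝓝 x)) : Tendsto (fun i => g i x) l (𝓝 ‖x‖) := by
  have herr : Tendsto (fun i => g i (x - u i)) l (𝓝 0) := by
    refine squeeze_zero_norm (fun i => ?_) (tendsto_iff_norm_sub_tendsto_zero.mp hu)
    exact (g i).le_of_opNorm_le (hg i) _ |>.trans_eq (by rw [one_mul, norm_sub_rev])
  simpa [hgu] using (hu.norm).add herr

/-- Banach–Alaoglu: every weak-* cluster point of the `g i` is a norming functional of `x`, hence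
the unique one. -/
lemma SmoothPt.tendsto_apply {ι : Type*} {l : Filter ι} {g : ι → StrongDual ℝ X} {x : X}
    (hx : SmoothPt x) {F : StrongDual ℝ X} (hF : F ∈ SuppFunc x) (hg : ∀ i, ‖g i‖ ≤ 1)
    (hgx : Tendsto (fun i => g i x) l (𝓝 ‖x‖)) (v : X) :
    Tendsto (fun i => g i v) l (𝓝 (F v)) := by
  suffices h : Tendsto (fun i => StrongDual.toWeakDual (g i)) l (𝓝 (StrongDual.toWeakDual F)) from
    (WeakDual.eval_continuous v).tendsto _ |>.comp h
  refine (WeakDual.isCompact_closedBall 0 1).tendsto_nhds_of_unique_mapClusterPt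
    (Eventually.of_forall fun i => by simpa using hg i) fun G hG hcl => ?_
  have hGx : G x = ‖x‖ := by
    have := hcl.tendsto_comp ((WeakDual.eval_continuous x).tendsto G)
    exact eq_of_nhds_neBot (this.neBot.mono (inf_le_inf_left _ hgx))
  have hG1 : ‖WeakDual.toStrongDual G‖ ≤ 1 := by simpa using hG
  exact hx.2.unique (mem_suppFunc_of_norm_le_one hx.1 hG1 hGx) hF

end BirkhoffJames

theorem stmt_1_general {X Y : Type*} [NormedAddCommGroup X] [NormedSpace ℝ X]
    [NormedAddCommGroup Y] [NormedSpace ℝ Y]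
    (A : Set X) (T : X →L[ℝ] Y) (hpres : ∀ x ∈ A, PreservesBJAt T x) :
    ∀ x ∈ closure A, SmoothPt x → PreservesBJAt T x := by
  intro x hxA hx v hv
  obtain ⟨u, huA, hu⟩ := mem_closure_iff_seq_limit.mp hxA
  choose g hg hgu using fun n => exists_dual_vector'' ℝ (u n)
  obtain ⟨F, hF, hFv⟩ := hv.exists_mem_suppFunc_apply_eq_zero hx.1
  have hgv : Tendsto (fun n => g n v) atTop (𝓝 0) :=
    hFv ▸ hx.tendsto_apply hF hg (tendsto_apply_of_apply_eq_norm hg hgu hu) v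
  have hw : Tendsto (fun n => v - (g n v / ‖u n‖) • u n) atTop (𝓝 v) := by
    simpa using tendsto_const_nhds.sub ((hgv.div hu.norm (norm_ne_zero_iff.mpr hx.1)).smul hu)
  have hTorth : ∀ n, BJOrth (T (u n)) (T (v - (g n v / ‖u n‖) • u n)) := fun n =>
    hpres _ (huA n) _ (bjOrth_sub_smul_of_apply_eq_norm (hg n) (hgu n) v)
  exact isClosed_setOf_bjOrth.mem_of_tendsto
    (((T.continuous.tendsto x).comp hu).prodMk_nhds ((T.continuous.tendsto v).comp hw))
    (Eventually.of_forall hTorth)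

theorem stmt_1 {X Y : Type*} [NormedAddCommGroup X] [NormedSpace ℝ X] [CompleteSpace X]
    [NormedAddCommGroup Y] [NormedSpace ℝ Y] [CompleteSpace Y]
    (A : Set X) (T : X →L[ℝ] Y) (hpres : ∀ x ∈ A, PreservesBJAt T x) :
    ∀ x ∈ closure A, SmoothPt x → PreservesBJAt T x :=
  stmt_1_general A T hpres
end

section
/- Let X, Y be real Banach spaces such that Sm(X) and Sm(Y) are dense G_δ subsets of X and Y respectively. If a bijective bounded linear operator T : X → Y preserves Birkhoff-James orthogonality at each point of Sm(X) ∩ T⁻¹(Sm(Y)), then there exists λ ≥ 0 such that ‖Tx‖ = λ‖x‖ for all x ∈ X, i.e., T is a scalar multiple of an isometry. -/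
open Metric Filter Set

open Topology

/-!
If `p` and `T p` are smooth and `T` preserves Birkhoff-James orthogonality at `p`, the kernel of
the supporting functional `F` of `p` lies in that of `G ∘ T`, `G` the supporting functional of
`T p`; hence `G ∘ T = (‖T p‖ / ‖p‖) • F`. On a line `t ↦ u + t • v`, `F v` and `G (T v)` are
subgradients of the convex functions `‖u + t • v‖` and `‖T (u + t • v)‖`. Where such points are
dense on the line, subgradients converge to right derivatives, so the two right derivatives stay
proportional with factor the ratio of the functions, and the ratio is constant on the line.
Since these points form a dense `Gδ`, by Baire's theorem the lines in any direction that meet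
them densely pass arbitrarily close to every point, and continuity gives `‖T x‖ * ‖y‖ = ‖T y‖ * ‖x‖` for all `x`, `y`.
-/

section SupportFunctional

variable {X : Type*} [NormedAddCommGroup X] [NormedSpace ℝ X] {x v : X} {F : StrongDual ℝ X}
  {m : ℝ}

theorem apply_le_norm_of_mem_suppFunc (hF : F ∈ SuppFunc x) (w : X) : F w ≤ ‖w‖ :=
  (le_abs_self _).trans ((F.le_opNorm w).trans_eq (by rw [hF.1, one_mul]))

theorem norm_add_mul_le_of_mem_suppFunc (hF : F ∈ SuppFunc x) (t : ℝ) :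
    ‖x‖ + t * F v ≤ ‖x + t • v‖ := by
  simpa [hF.2] using apply_le_norm_of_mem_suppFunc hF (x + t • v)

theorem mul_norm_add_mul_le_norm_smul_add_smul (hm : ∀ t : ℝ, ‖x‖ + t * m ≤ ‖x + t • v‖)
    (a b : ℝ) : a * ‖x‖ + b * m ≤ ‖a • x + b • v‖ := by
  -- shift `a` to `a + c > 0`, where the claim is `hm (b / (a + c))` rescaled
  set c := |a| + 1
  have hc : 0 < c := by positivity
  have hac : 0 < a + c := by linarith [neg_abs_le a]
  have hsplit : (a + c) • x + b • v = (a + c) • (x + (b / (a + c)) • v) := by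
    rw [smul_add, smul_smul, mul_div_cancel₀ _ hac.ne']
  have := calc
    (a + c) * ‖x‖ + b * m = (a + c) * (‖x‖ + b / (a + c) * m) := by field_simp
    _ ≤ (a + c) * ‖x + (b / (a + c)) • v‖ := mul_le_mul_of_nonneg_left (hm _) hac.le
    _ = ‖(a • x + b • v) + c • x‖ := by
      rw [add_right_comm, ← add_smul, hsplit, norm_smul, Real.norm_of_nonneg hac.le]
    _ ≤ ‖a • x + b • v‖ + c * ‖x‖ := by
      simpa [norm_smul, Real.norm_of_nonneg hc.le] using norm_add_le (a • x + b • v) (c • x)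
  linarith

theorem exists_mem_suppFunc_apply_eq_of_notMem_span (hx : x ≠ 0)
    (hv : v ∉ Submodule.span ℝ {x}) (hm : ∀ t : ℝ, ‖x‖ + t * m ≤ ‖x + t • v‖) :
    ∃ F ∈ SuppFunc x, F v = m := by
  -- Hahn–Banach extension of `a • x + b • v ↦ a * ‖x‖ + b * m`
  set f := (LinearPMap.mkSpanSingleton (σ := RingHom.id ℝ) x ‖x‖ hx).supSpanSingleton v m hv
  have hdom : ∀ w : f.domain, f w ≤ ‖(w : X)‖ := by
    rintro ⟨w, hw⟩
    obtain ⟨_, hy, _, hz, rfl⟩ := Submodule.mem_sup.1 hw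
    obtain ⟨a, rfl⟩ := Submodule.mem_span_singleton.1 hy
    obtain ⟨b, rfl⟩ := Submodule.mem_span_singleton.1 hz
    have := LinearPMap.supSpanSingleton_apply_mk _ v m hv (a • x) hy b
    rw [LinearPMap.mkSpanSingleton'_apply] at this
    simp only [f, this, RingHom.id_apply, smul_eq_mul]
    exact mul_norm_add_mul_le_norm_smul_add_smul hm a b
  obtain ⟨g, hgf, hg⟩ := exists_extension_of_le_sublinear f norm
    (fun c hc w => by rw [norm_smul, Real.norm_of_nonneg hc.le]) norm_add_le hdom
  have hg_abs (w : X) : ‖g w‖ ≤ 1 * ‖w‖ := by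
    rw [one_mul, Real.norm_eq_abs, abs_le]
    exact ⟨by linarith [show -g w ≤ ‖w‖ by simpa using hg (-w)], hg w⟩
  set G := g.mkContinuous 1 hg_abs
  have hGx : G x = ‖x‖ :=
    (hgf ⟨x, Submodule.mem_sup_left (Submodule.mem_span_singleton_self x)⟩).trans <|
      (LinearPMap.supSpanSingleton_apply_mk_of_mem _ _ hv _).trans
        (LinearPMap.mkSpanSingleton_apply ℝ ℝ hx _)
  have hGv : G v = m :=
    (hgf ⟨v, Submodule.mem_sup_right (Submodule.mem_span_singleton_self v)⟩).trans
      (LinearPMap.supSpanSingleton_apply_self _ _ hv)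
  refine ⟨G, ⟨le_antisymm (LinearMap.mkContinuous_norm_le _ zero_le_one _) ?_, hGx⟩, hGv⟩
  have := G.le_opNorm x
  rw [hGx, Real.norm_of_nonneg (norm_nonneg x)] at this
  exact le_of_mul_le_mul_right (by linarith) (norm_pos_iff.2 hx)

theorem exists_mem_suppFunc_apply_eq (hx : x ≠ 0) (hm : ∀ t : ℝ, ‖x‖ + t * m ≤ ‖x + t • v‖) :
    ∃ F ∈ SuppFunc x, F v = m := by
  by_cases hv : v ∈ Submodule.span ℝ {x}
  · obtain ⟨a, rfl⟩ := Submodule.mem_span_singleton.1 hv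
    obtain ⟨F, hF, hFx⟩ := exists_dual_vector ℝ x (norm_ne_zero_iff.2 hx)
    have h₁ := mul_norm_add_mul_le_norm_smul_add_smul hm a (-1)
    have h₂ := mul_norm_add_mul_le_norm_smul_add_smul hm (-a) 1
    simp only [add_neg_cancel, neg_smul, one_smul, neg_add_cancel, norm_zero] at h₁ h₂
    refine ⟨F, ⟨hF, hFx⟩, ?_⟩
    rw [map_smul, hFx, smul_eq_mul, RCLike.ofReal_real_eq_id, id]
    linarith
  · exact exists_mem_suppFunc_apply_eq_of_notMem_span hx hv hm

theorem bjOrth_of_mem_suppFunc_of_apply_eq_zero (hF : F ∈ SuppFunc x) (hv : F v = 0) :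
    BJOrth x v := fun t => by
  simpa [hv] using norm_add_mul_le_of_mem_suppFunc hF (v := v) t

theorem SmoothPt.apply_eq_zero_of_bjOrth (hx : SmoothPt x) (hF : F ∈ SuppFunc x)
    (hv : BJOrth x v) : F v = 0 := by
  obtain ⟨G, hG, hGv⟩ := exists_mem_suppFunc_apply_eq hx.1 (m := 0) fun t => by simpa using hv t
  rw [hx.2.unique hF hG, hGv]

theorem PreservesBJAt.apply_apply_eq {Y : Type*} [NormedAddCommGroup Y] [NormedSpace ℝ Y]
    {T : X →L[ℝ] Y} {p : X} (hT : PreservesBJAt T p) (hp : p ≠ 0) (hTp : SmoothPt (T p))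
    (hF : F ∈ SuppFunc p) {G : StrongDual ℝ Y} (hG : G ∈ SuppFunc (T p)) (w : X) :
    G (T w) = ‖T p‖ / ‖p‖ * F w := by
  have hp' : ‖p‖ ≠ 0 := norm_ne_zero_iff.2 hp
  have hker : F (w - (F w / ‖p‖) • p) = 0 := by
    rw [map_sub, map_smul, hF.2, smul_eq_mul, div_mul_cancel₀ _ hp', sub_self]
  have := hTp.apply_eq_zero_of_bjOrth hG (hT _ (bjOrth_of_mem_suppFunc_of_apply_eq_zero hF hker))
  rw [map_sub, map_smul, map_sub, map_smul, hG.2, smul_eq_mul, sub_eq_zero] at this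
  rw [this]
  field_simp

end SupportFunctional

section ConvexRatio

variable {h h₁ h₂ : ℝ → ℝ}

theorem ConvexOn.tendsto_rightDeriv_of_subgradient (hc : ConvexOn ℝ univ h) {t : ℝ}
    {s μ : ℕ → ℝ} (hts : ∀ n, t < s n) (hs : Tendsto s atTop (𝓝 t))
    (hμ : ∀ n z, h (s n) + (z - s n) * μ n ≤ h z) :
    Tendsto μ atTop (𝓝 (derivWithin h (Ioi t) t)) := by
  have hcont : Continuous h := continuousOn_univ.1 (hc.continuousOn isOpen_univ)
  have hderiv : Tendsto (slope h t) (𝓝[>] t) (𝓝 (derivWithin h (Ioi t) t)) :=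
    (hasDerivWithinAt_iff_tendsto_slope' (lt_irrefl t)).1
      (hc.hasDerivWithinAt_rightDeriv_of_mem_interior (by simp))
  have hs' : Tendsto s atTop (𝓝[>] t) := tendsto_nhdsWithin_iff.2 ⟨hs, .of_forall hts⟩
  have hlow (n : ℕ) : slope h t (s n) ≤ μ n := by
    have := hμ n t
    rw [slope_def_field, div_le_iff₀ (sub_pos.2 (hts n))]
    linarith
  have hupp (n : ℕ) {w : ℝ} (hw : s n < w) : μ n ≤ slope h (s n) w := by
    have := hμ n w
    rw [slope_def_field, le_div_iff₀ (sub_pos.2 hw)]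
    linarith
  refine tendsto_order.2 ⟨fun c hc => ((hderiv.comp hs').eventually (eventually_gt_nhds hc)).mono
    fun n hn => hn.trans_le (hlow n), fun c hc => ?_⟩
  obtain ⟨w, hwc, htw⟩ :=
    ((hderiv.eventually (eventually_lt_nhds hc)).and self_mem_nhdsWithin).exists
  have hlim : Tendsto (fun n => slope h (s n) w) atTop (𝓝 (slope h t w)) := by
    simp only [slope_def_field]
    exact (tendsto_const_nhds.sub ((hcont.tendsto t).comp hs)).div
      (tendsto_const_nhds.sub hs) (sub_ne_zero.2 (ne_of_gt htw))
  filter_upwards [hs.eventually (eventually_lt_nhds htw),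
    hlim.eventually (eventually_lt_nhds hwc)] with n hnw hn
  exact (hupp n hnw).trans_lt hn

theorem ConvexOn.div_eq_div_of_dense_subgradients (hc₁ : ConvexOn ℝ univ h₁)
    (hc₂ : ConvexOn ℝ univ h₂) (hpos : ∀ t, 0 < h₂ t) {S : Set ℝ} (hS : Dense S)
    (hsub : ∀ s ∈ S, ∃ m, (∀ z, h₂ s + (z - s) * m ≤ h₂ z) ∧
      ∀ z, h₁ s + (z - s) * (h₁ s / h₂ s * m) ≤ h₁ z)
    (a b : ℝ) : h₁ a / h₂ a = h₁ b / h₂ b := by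
  have hcont₁ : Continuous h₁ := continuousOn_univ.1 (hc₁.continuousOn isOpen_univ)
  have hcont₂ : Continuous h₂ := continuousOn_univ.1 (hc₂.continuousOn isOpen_univ)
  have hrd (t : ℝ) : derivWithin h₁ (Ioi t) t = h₁ t / h₂ t * derivWithin h₂ (Ioi t) t := by
    obtain ⟨s, -, hs, hst⟩ := hS.exists_seq_strictAnti_tendsto t
    choose m hm₂ hm₁ using fun n => hsub (s n) (hs n).2
    exact tendsto_nhds_unique (hc₁.tendsto_rightDeriv_of_subgradient (fun n => (hs n).1) hst hm₁)
      ((((hcont₁.tendsto t).comp hst).div ((hcont₂.tendsto t).comp hst) (hpos t).ne').mul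
        (hc₂.tendsto_rightDeriv_of_subgradient (fun n => (hs n).1) hst hm₂))
  have hq (t : ℝ) : HasDerivWithinAt (fun t => h₁ t / h₂ t) 0 (Ici t) t := by
    have := (hc₁.hasDerivWithinAt_rightDeriv_of_mem_interior (by simp : t ∈ interior univ)).div
      (hc₂.hasDerivWithinAt_rightDeriv_of_mem_interior (by simp)) (hpos t).ne'
    refine hasDerivWithinAt_Ioi_iff_Ici.1 (this.congr_deriv ?_)
    rw [hrd, div_mul_eq_mul_div, div_mul_eq_mul_div, mul_div_cancel_right₀ _ (hpos t).ne',
      sub_self, zero_div]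
  wlog hab : a ≤ b generalizing a b
  · exact (this b a (le_of_not_ge hab)).symm
  exact (constant_of_has_deriv_right_zero
    (hcont₁.div hcont₂ fun t => (hpos t).ne').continuousOn (fun t _ => hq t) b ⟨hab, le_rfl⟩).symm

end ConvexRatio

open TopologicalSpace in
theorem IsGδ.dense_setOf_dense_line_mem {X : Type*} [TopologicalSpace X] [AddCommGroup X]
    [Module ℝ X] [IsTopologicalAddGroup X] [ContinuousSMul ℝ X] [BaireSpace X] {D : Set X}
    (hG : IsGδ D) (hD : Dense D) (v : X) : Dense {u : X | Dense {t : ℝ | u + t • v ∈ D}} := by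
  obtain ⟨U, hUo, rfl⟩ := isGδ_iff_eq_iInter_nat.1 hG
  set B := {O ∈ countableBasis ℝ | O.Nonempty}
  have : Countable B := ((countable_countableBasis ℝ).mono (sep_subset _ _)).to_subtype
  have hW : Dense (⋂ i : ℕ × B, {u : X | ∃ t ∈ (i.2 : Set ℝ), u + t • v ∈ U i.1}) := by
    refine dense_iInter_of_isOpen (fun ⟨n, O, _⟩ => ?_) (fun ⟨n, O, hO⟩ => ?_)
    · have : {u : X | ∃ t ∈ O, u + t • v ∈ U n} = ⋃ t ∈ O, (· + t • v) ⁻¹' U n := by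
        ext; simp
      rw [this]
      exact isOpen_biUnion fun t _ => (hUo n).preimage (by fun_prop)
    · obtain ⟨t, ht⟩ := hO.2
      exact ((hD.mono (iInter_subset U n)).preimage (isOpenMap_add_right (t • v))).mono
        fun u hu => ⟨t, ht, hu⟩
  -- such `u` meet every `U n` on every basic open set of parameters `t`
  refine hW.mono fun u hu => ?_
  simp only [mem_iInter, ofPred_forall]
  refine dense_iInter_of_isOpen (fun n => (hUo n).preimage (by fun_prop)) fun n => ?_
  refine (isBasis_countableBasis ℝ).dense_iff.2 fun O hO hne => ?_
  exact mem_iInter.1 hu (n, ⟨O, hO, hne⟩)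

section Operator

variable {X Y : Type*} [NormedAddCommGroup X] [NormedSpace ℝ X] [NormedAddCommGroup Y]
  [NormedSpace ℝ Y]

theorem convexOn_norm_add_smul (u v : X) : ConvexOn ℝ univ fun t : ℝ => ‖u + t • v‖ :=
  ((convexOn_norm convex_univ).translate_right u).comp_linearMap (LinearMap.toSpanSingleton ℝ X v)

theorem norm_apply_mul_norm_add_eq_of_dense {T : X →L[ℝ] Y} {u v : X}
    (hS : Dense {t : ℝ | SmoothPt (T (u + t • v)) ∧ PreservesBJAt T (u + t • v)}) :
    ‖T u‖ * ‖u + v‖ = ‖T (u + v)‖ * ‖u‖ := by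
  by_cases huv : u ∈ Submodule.span ℝ {v}
  · obtain ⟨c, rfl⟩ := Submodule.mem_span_singleton.1 huv
    rw [show c • v + v = (c + 1) • v by rw [add_smul, one_smul]]
    simp only [map_smul, norm_smul]
    ring
  have hne (t : ℝ) : u + t • v ≠ 0 := fun h => huv <| by
    rw [eq_neg_of_add_eq_zero_left h]
    exact neg_mem (Submodule.smul_mem _ _ (Submodule.mem_span_singleton_self v))
  have hTline (t : ℝ) : T (u + t • v) = T u + t • T v := by rw [map_add, map_smul]
  have key := (convexOn_norm_add_smul (T u) (T v)).div_eq_div_of_dense_subgradients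
    (convexOn_norm_add_smul u v) (fun t => norm_pos_iff.2 (hne t)) hS ?_ 0 1
  · simp only [zero_smul, add_zero, one_smul, ← map_add] at key
    have hu0 : ‖u‖ ≠ 0 := by simpa using hne 0
    have huv0 : ‖u + v‖ ≠ 0 := by simpa using hne 1
    rw [div_eq_div_iff hu0 huv0] at key
    rw [key, mul_comm]
  rintro s ⟨hTs, hpres⟩
  obtain ⟨F, hF, hFs⟩ := exists_dual_vector ℝ (u + s • v) (norm_ne_zero_iff.2 (hne s))
  obtain ⟨G, hG, -⟩ := hTs.2
  have hshift (z : ℝ) : u + z • v = (u + s • v) + (z - s) • v := by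
    rw [add_assoc, ← add_smul, add_sub_cancel]
  refine ⟨F v, fun z => ?_, fun z => ?_⟩
  · rw [hshift z]
    exact norm_add_mul_le_of_mem_suppFunc ⟨hF, hFs⟩ _
  · rw [← hTline s, ← hTline z, ← hpres.apply_apply_eq (hne s) hTs ⟨hF, hFs⟩ hG, hshift z,
      map_add T _ ((z - s) • v), map_smul]
    exact norm_add_mul_le_of_mem_suppFunc hG _

end Operator

theorem exists_nonneg_forall_norm_eq_mul {X Y : Type*} [NormedAddCommGroup X]
    [NormedAddCommGroup Y] {f : X → Y} (hf : f 0 = 0)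
    (h : ∀ x y, ‖f x‖ * ‖y‖ = ‖f y‖ * ‖x‖) : ∃ lam : ℝ, 0 ≤ lam ∧ ∀ x, ‖f x‖ = lam * ‖x‖ := by
  by_cases hX : ∃ x₀ : X, x₀ ≠ 0
  · obtain ⟨x₀, hx₀⟩ := hX
    refine ⟨‖f x₀‖ / ‖x₀‖, by positivity, fun x => ?_⟩
    rw [div_mul_eq_mul_div, eq_div_iff (norm_ne_zero_iff.2 hx₀), h]
  · simp only [ne_eq, not_exists, not_not] at hX
    exact ⟨0, le_rfl, fun x => by simp [hX x, hf]⟩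

theorem stmt_8 {X Y : Type*} [NormedAddCommGroup X] [NormedSpace ℝ X] [CompleteSpace X]
    [NormedAddCommGroup Y] [NormedSpace ℝ Y] [CompleteSpace Y]
    (T : X →L[ℝ] Y) (hbij : Function.Bijective T)
    (hdX : Dense {x : X | SmoothPt x}) (hgX : IsGδ {x : X | SmoothPt x})
    (hdY : Dense {y : Y | SmoothPt y}) (hgY : IsGδ {y : Y | SmoothPt y})
    (hpres : ∀ x ∈ {x : X | SmoothPt x} ∩ T ⁻¹' {y : Y | SmoothPt y}, PreservesBJAt T x) :
    ∃ lam : ℝ, 0 ≤ lam ∧ ∀ x : X, ‖T x‖ = lam * ‖x‖ := by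
  set D := {x : X | SmoothPt x} ∩ T ⁻¹' {y : Y | SmoothPt y}
  have hDG : IsGδ D := hgX.inter (hgY.preimage T.continuous)
  have hDd : Dense D := Dense.inter_of_Gδ hgX (hgY.preimage T.continuous) hdX
    (hdY.preimage (T.isOpenMap hbij.2))
  refine exists_nonneg_forall_norm_eq_mul (map_zero T) fun x y => ?_
  have hclosed : IsClosed {u : X | ‖T u‖ * ‖u + (y - x)‖ = ‖T (u + (y - x))‖ * ‖u‖} :=
    isClosed_eq (by fun_prop) (by fun_prop)
  have hx : x ∈ closure {u : X | Dense {t : ℝ | u + t • (y - x) ∈ D}} :=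
    (hDG.dense_setOf_dense_line_mem hDd (y - x)).closure_eq ▸ mem_univ x
  have := hclosed.closure_subset_iff.2 (fun u hu => norm_apply_mul_norm_add_eq_of_dense
    (hu.mono fun t ht => ⟨ht.2, hpres _ ht⟩)) hx
  simpa using this
end

section
/- Let X be a finite-dimensional real Banach space and Y a proper linear subspace of X. Then the span of the union of the sets J(x) over all extreme points x of the unit ball of X with x ∉ Y equals the whole dual space X*. -/
open Metric Filter Set

/-!
Let `x` be killed by every `f ∈ J(e)` with `e` an extreme point of the unit ball outside `Y`.
For `w ∉ Y` take a functional `f` norming `w`. The face of the ball exposed by `f` has an extreme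
point outside `Y`: otherwise, by Krein–Milman, the face and with it `w / ‖w‖` lie in the closed
subspace `Y`. That point is extreme in the ball and `f ∈ J` of it, so `‖w‖ = f (w - x) ≤ ‖w - x‖`.
This holds on the complement of `Y`, which is dense since `Y` is proper, hence at `w = x`, and
`x = 0`. In finite dimensions, functionals without a common nonzero zero span the dual.
-/

theorem IsCompact.subset_of_extremePoints_subset {E : Type*} [AddCommGroup E] [Module ℝ E]
    [TopologicalSpace E] [T2Space E] [IsTopologicalAddGroup E] [ContinuousSMul ℝ E]
    [LocallyConvexSpace ℝ E] {K C : Set E} (hK : IsCompact K) (hKconv : Convex ℝ K)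
    (hC : IsClosed C) (hCconv : Convex ℝ C) (h : K.extremePoints ℝ ⊆ C) : K ⊆ C := by
  rw [← closure_convexHull_extremePoints hK hKconv]
  exact closure_minimal (convexHull_min h hCconv) hC

theorem StrongDual.span_eq_top_of_forall_apply_eq_zero {𝕜 E : Type*} [NontriviallyNormedField 𝕜]
    [CompleteSpace 𝕜] [NormedAddCommGroup E] [NormedSpace 𝕜 E] [FiniteDimensional 𝕜 E]
    {S : Set (StrongDual 𝕜 E)} (h : ∀ x : E, (∀ f ∈ S, f x = 0) → x = 0) :
    Submodule.span 𝕜 S = ⊤ := by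
  let toCLM : Module.Dual 𝕜 E ≃ₗ[𝕜] StrongDual 𝕜 E := LinearMap.toContinuousLinearMap
  set Φ : Subspace 𝕜 (Module.Dual 𝕜 E) := (Submodule.span 𝕜 S).comap toCLM.toLinearMap
  have hΦ : Φ.dualCoannihilator = ⊥ := by
    refine (Submodule.eq_bot_iff _).2 fun x hx => h x fun f hf => ?_
    exact (Submodule.mem_dualCoannihilator x).1 hx f (Submodule.subset_span hf)
  have hΦtop : Φ = ⊤ := by
    rw [← Subspace.dualCoannihilator_dualAnnihilator_eq (W := Φ), hΦ,
      Submodule.dualAnnihilator_bot]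
  refine eq_top_iff.2 fun f _ => ?_
  exact (hΦtop ▸ Submodule.mem_top : (f : Module.Dual 𝕜 E) ∈ Φ)

section UnitBall

variable {X : Type*} [NormedAddCommGroup X] [NormedSpace ℝ X]

theorem apply_le_norm_of_norm_le_one {f : StrongDual ℝ X} (hf : ‖f‖ ≤ 1) (y : X) : f y ≤ ‖y‖ :=
  (le_abs_self _).trans ((f.le_of_opNorm_le hf y).trans_eq (one_mul _))

theorem mem_suppFunc_of_apply_eq_one {f : StrongDual ℝ X} (hf : ‖f‖ = 1) {e : X}
    (he : ‖e‖ ≤ 1) (hfe : f e = 1) : f ∈ SuppFunc e :=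
  ⟨hf, by rw [hfe, le_antisymm he (hfe ▸ apply_le_norm_of_norm_le_one hf.le e)]⟩

theorem exists_extremePoint_not_mem_suppFunc_apply_eq_norm [ProperSpace X] {Y : Submodule ℝ X}
    (hY : IsClosed (Y : Set X)) {w : X} (hw : w ∉ Y) :
    ∃ e ∈ (closedBall (0 : X) 1).extremePoints ℝ, e ∉ Y ∧ ∃ f ∈ SuppFunc e, f w = ‖w‖ := by
  have hw0 : ‖w‖ ≠ 0 := norm_ne_zero_iff.2 fun h => hw (h ▸ Y.zero_mem)
  obtain ⟨f, hf, hfw⟩ := exists_dual_vector ℝ w hw0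
  replace hfw : f w = ‖w‖ := hfw
  have hfle : ∀ y ∈ closedBall (0 : X) 1, f y ≤ 1 := fun y hy =>
    (apply_le_norm_of_norm_le_one hf.le y).trans (mem_closedBall_zero_iff.1 hy)
  set F := f.toExposed (closedBall (0 : X) 1)
  have hF : IsExposed ℝ (closedBall (0 : X) 1) F := ContinuousLinearMap.toExposed.isExposed
  have hfp : f (‖w‖⁻¹ • w) = 1 := by
    rw [map_smul, hfw, smul_eq_mul, inv_mul_cancel₀ hw0]
  have hp : ‖w‖⁻¹ • w ∈ F := by
    refine ⟨?_, fun y hy => hfp ▸ hfle y hy⟩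
    rw [mem_closedBall_zero_iff, norm_smul, norm_inv, norm_norm, inv_mul_cancel₀ hw0]
  obtain ⟨e, he, heY⟩ : ∃ e ∈ F.extremePoints ℝ, e ∉ Y := by
    by_contra! hFY
    have hpY := (hF.isCompact (isCompact_closedBall 0 1)).subset_of_extremePoints_subset
      (hF.convex (convex_closedBall 0 1)) hY Y.convex hFY hp
    exact hw (by simpa [smul_smul, mul_inv_cancel₀ hw0] using Y.smul_mem ‖w‖ hpY)
  have hfe : f e = 1 := le_antisymm (hfle e he.1.1) (hfp ▸ he.1.2 _ hp.1)
  exact ⟨e, hF.isExtreme.extremePoints_subset_extremePoints he, heY, f,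
    mem_suppFunc_of_apply_eq_one hf (mem_closedBall_zero_iff.1 he.1.1) hfe, hfw⟩

theorem eq_zero_of_forall_suppFunc_extremePoint_apply_eq_zero [ProperSpace X]
    {Y : Submodule ℝ X} (hY : IsClosed (Y : Set X)) (hYtop : Y ≠ ⊤) {x : X}
    (h : ∀ e ∈ (closedBall (0 : X) 1).extremePoints ℝ, e ∉ Y → ∀ f ∈ SuppFunc e, f x = 0) :
    x = 0 := by
  have hle : ∀ w ∉ Y, ‖w‖ ≤ ‖w - x‖ := by
    intro w hw
    obtain ⟨e, he, heY, f, hf, hfw⟩ := exists_extremePoint_not_mem_suppFunc_apply_eq_norm hY hw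
    calc ‖w‖ = f (w - x) := by rw [map_sub, h e he heY f hf, sub_zero, hfw]
      _ ≤ ‖w - x‖ := apply_le_norm_of_norm_le_one hf.1.le _
  have hdense : Dense (Yᶜ : Set X) :=
    interior_eq_empty_iff_dense_compl.1 <| not_nonempty_iff_eq_empty.1 fun hint =>
      hYtop (Y.eq_top_of_nonempty_interior' hint)
  have hclosed : IsClosed {w : X | ‖w‖ ≤ ‖w - x‖} :=
    isClosed_le continuous_norm (continuous_id.sub continuous_const).norm
  have hx : ‖x‖ ≤ ‖x - x‖ :=
    hclosed.closure_subset_iff.2 hle (hdense.closure_eq.symm ▸ mem_univ x)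
  simpa using hx

end UnitBall

theorem stmt_12 {X : Type*} [NormedAddCommGroup X] [NormedSpace ℝ X] [FiniteDimensional ℝ X]
    (Y : Submodule ℝ X) (hY : Y ≠ ⊤) :
    Submodule.span ℝ
      (⋃ x ∈ {x : X | x ∈ (Metric.closedBall (0 : X) 1).extremePoints ℝ ∧ x ∉ Y},
        SuppFunc x) = ⊤ := by
  refine StrongDual.span_eq_top_of_forall_apply_eq_zero fun x hx => ?_
  have : ProperSpace X := FiniteDimensional.proper_real X
  refine eq_zero_of_forall_suppFunc_extremePoint_apply_eq_zero
    (Submodule.closed_of_finiteDimensional Y) hY fun e he heY f hf => ?_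
  exact hx f (mem_biUnion (x := e) ⟨he, heY⟩ hf)
end

section
/- Let X be a finite-dimensional real Banach space. If a nonzero linear operator T : X → X preserves Birkhoff-James orthogonality at each extreme point of the closed unit ball of X, then T is bijective. -/
open Metric Filter Set

/-!
Suppose `T w = 0` with `w ≠ 0`, and pick `v` with `T v ≠ 0`. After rescaling `w`, a norming
functional `f` of `u = v + w` satisfies `f w > 0`. The face of the unit ball exposed by `f`
is compact and convex, so by Krein–Milman one of its extreme points `e` has `T e ≠ 0`; it is
an extreme point of the ball and `f` norms it. Then `e ⊥_B f e • w - f w • e`, and applying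
`T` gives `T e ⊥_B -(f w) • T e`, forcing `T e = 0`. So `T` is injective, hence bijective.
-/

lemma StrongDual.apply_le_norm {X : Type*} [NormedAddCommGroup X] [NormedSpace ℝ X]
    {f : StrongDual ℝ X} (hf : ‖f‖ ≤ 1) (x : X) : f x ≤ ‖x‖ :=
  (Real.le_norm_self _).trans <| by simpa using f.le_of_opNorm_le hf x

section BirkhoffJames

variable {X : Type*} [NormedAddCommGroup X] [NormedSpace ℝ X]

lemma bjOrth_of_dual {f : StrongDual ℝ X} {x v : X} (hf : ‖f‖ ≤ 1) (hx : f x = ‖x‖)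
    (hv : f v = 0) : BJOrth x v := fun lam =>
  calc ‖x‖ = f (x + lam • v) := by simp [hx, hv]
    _ ≤ ‖x + lam • v‖ := StrongDual.apply_le_norm hf _

lemma BJOrth.eq_zero_of_smul_self {u : X} {c : ℝ} (h : BJOrth u (c • u)) (hc : c ≠ 0) :
    u = 0 := by
  have := h (-c⁻¹)
  rwa [smul_smul, neg_mul, inv_mul_cancel₀ hc, neg_one_smul, add_neg_cancel, norm_zero,
    norm_le_zero_iff] at this

lemma PreservesBJAt.apply_eq_zero_of_dual {Y : Type*} [NormedAddCommGroup Y] [NormedSpace ℝ Y]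
    {T : X →L[ℝ] Y} {e w : X} {f : StrongDual ℝ X} (hT : PreservesBJAt T e) (hw : T w = 0)
    (hf : ‖f‖ ≤ 1) (he : f e = ‖e‖) (hfw : f w ≠ 0) : T e = 0 := by
  have horth : BJOrth e (f e • w - f w • e) :=
    bjOrth_of_dual hf he (by simp only [map_sub, map_smul, smul_eq_mul]; ring)
  have hTz : T (f e • w - f w • e) = (-f w) • T e := by simp [hw]
  exact (hTz ▸ hT _ horth).eq_zero_of_smul_self (neg_ne_zero.mpr hfw)

end BirkhoffJames

lemma IsCompact.exists_mem_extremePoints_apply_ne_zero {E F : Type*} [AddCommGroup E]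
    [Module ℝ E] [TopologicalSpace E] [T2Space E] [IsTopologicalAddGroup E]
    [ContinuousSMul ℝ E] [LocallyConvexSpace ℝ E] [AddCommGroup F] [Module ℝ F]
    [TopologicalSpace F] [T1Space F] {K : Set E} (hK : IsCompact K) (hconv : Convex ℝ K)
    (T : E →L[ℝ] F) {x : E} (hx : x ∈ K) (hTx : T x ≠ 0) :
    ∃ e ∈ K.extremePoints ℝ, T e ≠ 0 := by
  by_contra! h
  have hker : K ⊆ LinearMap.ker (T : E →ₗ[ℝ] F) := by
    rw [← closure_convexHull_extremePoints hK hconv]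
    exact closure_minimal (convexHull_min h (Submodule.convex _)) T.isClosed_ker
  exact hTx (hker hx)

section Norming

variable {X : Type*} [NormedAddCommGroup X] [NormedSpace ℝ X]

lemma exists_dual_norming_add_smul_pos (v : X) {w : X} (hw : w ≠ 0) :
    ∃ (t : ℝ) (f : StrongDual ℝ X), ‖f‖ ≤ 1 ∧ f (v + t • w) = ‖v + t • w‖ ∧ 0 < f w := by
  have hw' : 0 < ‖w‖ := norm_pos_iff.mpr hw
  set t := (2 * ‖v‖ + 1) / ‖w‖
  have ht : 0 < t := by positivity
  have htw : ‖t • w‖ = 2 * ‖v‖ + 1 := by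
    rw [norm_smul, Real.norm_of_nonneg ht.le, div_mul_cancel₀ _ hw'.ne']
  obtain ⟨f, hf, hfu⟩ := exists_dual_vector'' ℝ (v + t • w)
  replace hfu : f (v + t • w) = ‖v + t • w‖ := mod_cast hfu
  refine ⟨t, f, hf, hfu, pos_of_mul_pos_right (a := t) ?_ ht.le⟩
  -- `t * f w = ‖v + t • w‖ - f v ≥ (‖t • w‖ - ‖v‖) - ‖v‖ = 1`
  have hfv := StrongDual.apply_le_norm hf v
  have htri := norm_sub_norm_le (t • w) (-v)
  rw [sub_neg_eq_add, add_comm, norm_neg] at htri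
  have : f (v + t • w) = f v + t * f w := by simp
  linarith

variable [ProperSpace X]

lemma exists_mem_extremePoints_closedBall_norming {Y : Type*} [NormedAddCommGroup Y]
    [NormedSpace ℝ Y] {f : StrongDual ℝ X} (hf : ‖f‖ ≤ 1) (T : X →L[ℝ] Y) {u : X}
    (hfu : f u = ‖u‖) (hTu : T u ≠ 0) :
    ∃ e ∈ (closedBall (0 : X) 1).extremePoints ℝ, f e = ‖e‖ ∧ T e ≠ 0 := by
  have hu : ‖u‖ ≠ 0 := norm_ne_zero_iff.mpr fun h => hTu (by simp [h])
  set B := closedBall (0 : X) 1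
  set F := f.toExposed B
  have hexp : IsExposed ℝ B F := ContinuousLinearMap.toExposed.isExposed
  set u₁ := ‖u‖⁻¹ • u
  have hfu₁ : f u₁ = 1 := by simp [u₁, hfu, hu]
  have hu₁F : u₁ ∈ F := by
    refine ⟨by simp [u₁, B, norm_smul, hu], fun y hy => ?_⟩
    exact hfu₁ ▸ (StrongDual.apply_le_norm hf y).trans (mem_closedBall_zero_iff.mp hy)
  obtain ⟨e, he, hTe⟩ :=
    (hexp.isCompact (isCompact_closedBall _ _)).exists_mem_extremePoints_apply_ne_zero
      (hexp.convex (convex_closedBall _ _)) T hu₁F (by simp [u₁, hTu, hu])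
  obtain ⟨heB, hmax⟩ := extremePoints_subset he
  -- `1 = f u₁ ≤ f e ≤ ‖e‖ ≤ 1`
  have h₁ := hfu₁ ▸ hmax u₁ hu₁F.1
  have h₂ := StrongDual.apply_le_norm hf e
  have h₃ := mem_closedBall_zero_iff.mp heB
  exact ⟨e, hexp.isExtreme.extremePoints_subset_extremePoints he, by linarith, hTe⟩

end Norming

lemma injective_of_preservesBJAt_extremePoints {X Y : Type*} [NormedAddCommGroup X]
    [NormedSpace ℝ X] [ProperSpace X] [NormedAddCommGroup Y] [NormedSpace ℝ Y]
    {T : X →L[ℝ] Y} (hT : T ≠ 0)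
    (hpres : ∀ x ∈ (closedBall (0 : X) 1).extremePoints ℝ, PreservesBJAt T x) :
    Function.Injective T := by
  refine (injective_iff_map_eq_zero T).mpr fun w hw => ?_
  by_contra hw0
  obtain ⟨v, hv⟩ : ∃ v, T v ≠ 0 := by
    by_contra! h
    exact hT (ContinuousLinearMap.ext h)
  obtain ⟨t, f, hf, hfu, hfw⟩ := exists_dual_norming_add_smul_pos v hw0
  obtain ⟨e, he, hfe, hTe⟩ :=
    exists_mem_extremePoints_closedBall_norming hf T hfu (by simpa [hw] using hv)
  exact hTe ((hpres e he).apply_eq_zero_of_dual hw hf hfe hfw.ne')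

theorem stmt_13 {X : Type*} [NormedAddCommGroup X] [NormedSpace ℝ X] [FiniteDimensional ℝ X]
    (T : X →L[ℝ] X) (hT : T ≠ 0)
    (hpres : ∀ x ∈ (Metric.closedBall (0 : X) 1).extremePoints ℝ, PreservesBJAt T x) :
    Function.Bijective T := by
  have hinj := injective_of_preservesBJAt_extremePoints hT hpres
  exact ⟨hinj, LinearMap.injective_iff_surjective (f := (T : X →ₗ[ℝ] X)).mp hinj⟩
end
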